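/- arXiv:1411.3005 — 6 statements merged into one kernel-verified Lean document; each statement's English description precedes it below -/
import Mathlib

section
/- For all integers with 1 < i ≤ j ≤ r and 1 < i' ≤ j' ≤ r, if p(i,j) ≥ p(i',j'), then p(i−1,j) − p(i'−1,j') ≥ p(i,j) − p(i',j'). -/
/-!
Let `T(i) = (i-1)(2r-i+2)/2`, so that `p(i,j) = T(i) + (r-j+1)`. Since `T(i) - T(i-1) = r-i+2`,
the claimed inequality says exactly `i' ≤ i`. This holds because `p` lists the pairs `i ≤ j ≤ r`
row by row: each row `i` occupies the block `T(i) < p ≤ T(i+1)`, so a larger row index gives a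
larger value of `p`.
-/

def pairIndex (r i j : ℤ) : ℤ := (i - 1) * (2 * r - i + 2) / 2 + (r - j + 1)

lemma two_mul_rowOffset (r i : ℤ) :
    2 * ((i - 1) * (2 * r - i + 2) / 2) = (i - 1) * (2 * r - i + 2) := by
  refine Int.mul_ediv_cancel' ?_
  rcases Int.even_or_odd i with ⟨k, hk⟩ | ⟨k, hk⟩
  · exact Dvd.dvd.mul_left ⟨r - k + 1, by omega⟩ _
  · exact Dvd.dvd.mul_right ⟨k, by omega⟩ _

lemma pairIndex_sub_pairIndex_pred (r i j : ℤ) :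
    pairIndex r i j - pairIndex r (i - 1) j = r - i + 2 := by
  have := two_mul_rowOffset r i
  have := two_mul_rowOffset r (i - 1)
  unfold pairIndex
  linarith

lemma pairIndex_lt_of_lt {r i j i' j' : ℤ} (hij : i ≤ j) (hi'r : i' ≤ r) (hj'r : j' ≤ r)
    (hii' : i < i') : pairIndex r i j < pairIndex r i' j' := by
  have := two_mul_rowOffset r i
  have := two_mul_rowOffset r i'
  unfold pairIndex
  nlinarith [mul_nonneg (show (0 : ℤ) ≤ i' - i - 1 by omega) (show (0 : ℤ) ≤ r - i' by omega)]

theorem stmt_1_general (r : ℤ) (i j i' j' : ℤ)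
    (hij : i ≤ j)
    (hi'j' : i' ≤ j') (hj'r : j' ≤ r)
    (h : (i - 1) * (2 * r - i + 2) / 2 + (r - j + 1) ≥
      (i' - 1) * (2 * r - i' + 2) / 2 + (r - j' + 1)) :
    ((i - 1) - 1) * (2 * r - (i - 1) + 2) / 2 + (r - j + 1) -
        (((i' - 1) - 1) * (2 * r - (i' - 1) + 2) / 2 + (r - j' + 1)) ≥
      (i - 1) * (2 * r - i + 2) / 2 + (r - j + 1) -
        ((i' - 1) * (2 * r - i' + 2) / 2 + (r - j' + 1)) := by
  change pairIndex r i j ≥ pairIndex r i' j' at h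
  change pairIndex r (i - 1) j - pairIndex r (i' - 1) j' ≥ pairIndex r i j - pairIndex r i' j'
  have hi'i : i' ≤ i :=
    not_lt.mp fun hlt => (pairIndex_lt_of_lt hij (hi'j'.trans hj'r) hj'r hlt).not_ge h
  linarith [pairIndex_sub_pairIndex_pred r i j, pairIndex_sub_pairIndex_pred r i' j']

/-- For integers `1 < i ≤ j ≤ r` and `1 < i' ≤ j' ≤ r`, with
`p(i,j) = (i−1)(2r−i+2)/2 + (r−j+1)`, if `p(i,j) ≥ p(i',j')` then
`p(i−1,j) − p(i'−1,j') ≥ p(i,j) − p(i',j')`. -/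
theorem stmt_1 (r : ℤ) (hr : 1 ≤ r) (i j i' j' : ℤ)
    (hi : 1 < i) (hij : i ≤ j) (hjr : j ≤ r)
    (hi' : 1 < i') (hi'j' : i' ≤ j') (hj'r : j' ≤ r)
    (h : (i - 1) * (2 * r - i + 2) / 2 + (r - j + 1) ≥
      (i' - 1) * (2 * r - i' + 2) / 2 + (r - j' + 1)) :
    ((i - 1) - 1) * (2 * r - (i - 1) + 2) / 2 + (r - j + 1) -
        (((i' - 1) - 1) * (2 * r - (i' - 1) + 2) / 2 + (r - j' + 1)) ≥
      (i - 1) * (2 * r - i + 2) / 2 + (r - j + 1) -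
        ((i' - 1) * (2 * r - i' + 2) / 2 + (r - j' + 1)) :=
  stmt_1_general r i j i' j' hij hi'j' hj'r h
end

section
/- For every permutation σ of {1, …, r} and every ε ∈ 𝓔, the function σ·ε again belongs to 𝓔, so that (σ,ε) ↦ σ·ε defines an action of the symmetric group S_r on 𝓔; moreover this action is transitive: for all ε, ε' ∈ 𝓔 there exists a permutation σ of {1, …, r} with ε' = σ·ε. -/
/-- The set 𝓔 of functions `ε : {1,…,r} × J → {0,1}` (indexed by `Fin r` and the
subtype of members of `J`), such that each column `j` sums to `j` and each row is
nondecreasing in `j ∈ J`. -/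
def IsE (r : ℕ) (J : Finset ℕ) (ε : Fin r → {j // j ∈ J} → ℕ) : Prop :=
  (∀ k j, ε k j ≤ 1) ∧
  (∀ j : {j // j ∈ J}, ∑ k : Fin r, ε k j = (j : ℕ)) ∧
  (∀ (k : Fin r) (j j' : {j // j ∈ J}), (j : ℕ) ≤ (j' : ℕ) → ε k j ≤ ε k j')

/-! Each row of an `ε ∈ 𝓔` is a nondecreasing `0/1` function on `J` whose last entry is `1`
(column `r` sums to `r`), hence the indicator of `{j ≥ t k}` for a threshold `t k ∈ J`. The column
sums say `#{k | t k ≤ j} = j` for `j ∈ J`; as `t` takes values in `J`, this pins down the counting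
function of `t` and therefore the size of every fibre of `t`, independently of `ε`. Two functions
with fibres of equal sizes differ by a permutation of the domain. -/

open Finset

theorem exists_perm_eq_comp_of_card_fiber_eq {α β : Type*} [Fintype α] [DecidableEq β]
    {f g : α → β} (h : ∀ b, #{a | f a = b} = #{a | g a = b}) :
    ∃ σ : Equiv.Perm α, g = f ∘ σ := by
  let e (b : β) : {a // g a = b} ≃ {a // f a = b} :=
    Fintype.equivOfCardEq (by rw [Fintype.card_subtype, Fintype.card_subtype, h b])
  exact ⟨Equiv.ofFiberEquiv e, funext fun a => (Equiv.ofFiberEquiv_map e a).symm⟩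

section CountingFunction

variable {κ ι : Type*} [Fintype κ] [LinearOrder ι] [Fintype ι] {t t' : κ → ι}

theorem card_filter_lt_eq_of_card_filter_le_eq (h : ∀ j, #{k | t k ≤ j} = #{k | t' k ≤ j})
    (j : ι) : #{k | t k < j} = #{k | t' k < j} := by
  rcases (univ.filter (· < j)).eq_empty_or_nonempty with hj | hj
  · have hnone (s : κ → ι) (k : κ) : ¬ s k < j := fun hk =>
      (filter_eq_empty_iff.1 hj) (mem_univ (s k)) hk
    simp [hnone]
  · set m := (univ.filter (· < j)).max' hj
    have hmj : m < j := (mem_filter.1 ((univ.filter (· < j)).max'_mem hj)).2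
    have hlt_iff (s : κ → ι) (k : κ) : s k < j ↔ s k ≤ m :=
      ⟨fun hk => le_max' _ _ (by simpa using hk), fun hk => hk.trans_lt hmj⟩
    simp only [hlt_iff, h m]

theorem card_fiber_eq_of_card_filter_le_eq (h : ∀ j, #{k | t k ≤ j} = #{k | t' k ≤ j})
    (j : ι) : #{k | t k = j} = #{k | t' k = j} := by
  classical
  have hsplit (s : κ → ι) : #{k | s k ≤ j} = #{k | s k < j} + #{k | s k = j} := by
    rw [← card_union_of_disjoint (disjoint_filter.2 fun k _ hlt heq => hlt.ne heq),
      ← filter_or]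
    simp only [le_iff_lt_or_eq]
  linarith [hsplit t, hsplit t', h j, card_filter_lt_eq_of_card_filter_le_eq h j]

end CountingFunction

theorem exists_eq_ite_le_of_monotone {ι : Type*} [LinearOrder ι] [Fintype ι] {f : ι → ℕ}
    (hf : Monotone f) (hle : ∀ i, f i ≤ 1) {i₀ : ι} (hi₀ : f i₀ = 1) :
    ∃ a, ∀ i, f i = if a ≤ i then 1 else 0 := by
  set S := univ.filter fun i => f i = 1
  have hne : S.Nonempty := ⟨i₀, by simpa [S] using hi₀⟩
  have ha : f (S.min' hne) = 1 := (mem_filter.1 (S.min'_mem hne)).2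
  refine ⟨S.min' hne, fun i => ?_⟩
  split_ifs with hai
  · exact le_antisymm (hle i) (ha ▸ hf hai)
  · have : f i ≠ 1 := fun hi => hai (S.min'_le i (by simpa [S] using hi))
    have := hle i
    omega

namespace IsE

variable {r : ℕ} {J : Finset ℕ} {ε ε' : Fin r → {j // j ∈ J} → ℕ}

theorem comp_equiv (hε : IsE r J ε) (σ : Equiv.Perm (Fin r)) : IsE r J (ε ∘ σ) := by
  obtain ⟨hle, hsum, hmono⟩ := hε
  exact ⟨fun k => hle (σ k), fun j => (hsum j) ▸ Equiv.sum_comp σ (ε · j), fun k => hmono (σ k)⟩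

theorem apply_top_eq_one (hε : IsE r J ε) (hrJ : r ∈ J) (k : Fin r) : ε k ⟨r, hrJ⟩ = 1 := by
  obtain ⟨hle, hsum, -⟩ := hε
  by_contra hk
  have : ∑ k, ε k ⟨r, hrJ⟩ < ∑ _k : Fin r, 1 :=
    sum_lt_sum (fun i _ => hle i _) ⟨k, mem_univ k, (hle k _).lt_of_ne hk⟩
  simp [hsum] at this

theorem exists_threshold (hε : IsE r J ε) (hrJ : r ∈ J) :
    ∃ t : Fin r → {j // j ∈ J},
      (∀ k j, ε k j = if t k ≤ j then 1 else 0) ∧ ∀ j, #{k | t k ≤ j} = (j : ℕ) := by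
  choose t ht using fun k =>
    exists_eq_ite_le_of_monotone (fun j j' => hε.2.2 k j j') (hε.1 k) (hε.apply_top_eq_one hrJ k)
  refine ⟨t, ht, fun j => ?_⟩
  rw [← hε.2.1 j]
  simp only [ht, sum_boole, Nat.cast_id]

theorem exists_perm_eq_comp (hrJ : r ∈ J) (hε : IsE r J ε) (hε' : IsE r J ε') :
    ∃ σ : Equiv.Perm (Fin r), ε' = ε ∘ σ := by
  obtain ⟨t, ht, hcount⟩ := hε.exists_threshold hrJ
  obtain ⟨t', ht', hcount'⟩ := hε'.exists_threshold hrJ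
  obtain ⟨σ, hσ⟩ := exists_perm_eq_comp_of_card_fiber_eq
    (card_fiber_eq_of_card_filter_le_eq fun j => (hcount j).trans (hcount' j).symm)
  refine ⟨σ, funext fun k => funext fun j => ?_⟩
  rw [ht' k j, hσ, Function.comp_apply, ← ht]
  rfl

end IsE

theorem stmt_2_general (r : ℕ) (J : Finset ℕ) (hrJ : r ∈ J) :
    (∀ (σ : Equiv.Perm (Fin r)) (ε : Fin r → {j // j ∈ J} → ℕ),
        IsE r J ε → IsE r J (fun k j => ε (σ⁻¹ k) j)) ∧
    (∀ ε : Fin r → {j // j ∈ J} → ℕ,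
        (fun k j => ε ((1 : Equiv.Perm (Fin r))⁻¹ k) j) = ε) ∧
    (∀ (σ τ : Equiv.Perm (Fin r)) (ε : Fin r → {j // j ∈ J} → ℕ),
        (fun k j => ε ((σ * τ)⁻¹ k) j) =
          (fun k j => (fun k' j' => ε (τ⁻¹ k') j') (σ⁻¹ k) j)) ∧
    (∀ ε ε' : Fin r → {j // j ∈ J} → ℕ, IsE r J ε → IsE r J ε' →
        ∃ σ : Equiv.Perm (Fin r), ε' = fun k j => ε (σ⁻¹ k) j) := by
  refine ⟨fun σ ε hε => hε.comp_equiv σ⁻¹, fun ε => rfl, fun σ τ ε => rfl, ?_⟩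
  intro ε ε' hε hε'
  obtain ⟨σ, hσ⟩ := IsE.exists_perm_eq_comp hrJ hε hε'
  exact ⟨σ⁻¹, by rw [hσ, inv_inv]; rfl⟩

/-- `(σ, ε) ↦ σ·ε`, `(σ·ε)(k,j) = ε(σ⁻¹ k, j)`, maps 𝓔 to 𝓔, defines an
action of the symmetric group on 𝓔, and this action is transitive. -/
theorem stmt_2 (r : ℕ) (hr : 1 ≤ r) (J : Finset ℕ)
    (hJ : J ⊆ Finset.Icc 1 r) (hrJ : r ∈ J) :
    (∀ (σ : Equiv.Perm (Fin r)) (ε : Fin r → {j // j ∈ J} → ℕ),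
        IsE r J ε → IsE r J (fun k j => ε (σ⁻¹ k) j)) ∧
    (∀ ε : Fin r → {j // j ∈ J} → ℕ,
        (fun k j => ε ((1 : Equiv.Perm (Fin r))⁻¹ k) j) = ε) ∧
    (∀ (σ τ : Equiv.Perm (Fin r)) (ε : Fin r → {j // j ∈ J} → ℕ),
        (fun k j => ε ((σ * τ)⁻¹ k) j) =
          (fun k j => (fun k' j' => ε (τ⁻¹ k') j') (σ⁻¹ k) j)) ∧
    (∀ ε ε' : Fin r → {j // j ∈ J} → ℕ, IsE r J ε → IsE r J ε' →
        ∃ σ : Equiv.Perm (Fin r), ε' = fun k j => ε (σ⁻¹ k) j) :=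
  stmt_2_general r J hrJ
end

section
/- For every permutation σ of {1, …, r} there exists a Richardson flag (E_k)_{0 ≤ k ≤ r} for X such that dim_F(E_k/E_{k−1}) = Σ_{j∈J, j ≥ σ(k)} d_j for every 1 ≤ k ≤ r. -/
/-- Index type of the standard basis `e(i,j,k)`: triples `(i,j,k)` with
`1 ≤ i ≤ j ≤ r`, `1 ≤ k ≤ d j` (so in particular `d j ≠ 0`, i.e. `j ∈ J`). -/
def RIdx (r : ℕ) (d : ℕ → ℕ) : Type :=
  {x : ℕ × ℕ × ℕ //
    1 ≤ x.1 ∧ x.1 ≤ x.2.1 ∧ x.2.1 ≤ r ∧ 1 ≤ x.2.2 ∧ x.2.2 ≤ d x.2.1}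

/-- A Richardson flag for `X`: a chain `0 = E_0 ⊆ E_1 ⊆ ⋯ ⊆ E_r = V` with
`X(E_k) ⊆ E_{k−1}` whose multiset of successive quotient dimensions is
`{Σ_{j≥m} d_j : 1 ≤ m ≤ r}`. -/
def IsRichardsonFlag {F : Type*} [Field F] {V : Type*} [AddCommGroup V] [Module F V]
    (X : V →ₗ[F] V) (r : ℕ) (d : ℕ → ℕ) (E : ℕ → Submodule F V) : Prop :=
  E 0 = ⊥ ∧ E r = ⊤ ∧ (∀ k, k < r → E k ≤ E (k + 1)) ∧
    (∀ k, 1 ≤ k → k ≤ r → ∀ v ∈ E k, X v ∈ E (k - 1)) ∧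
    (Finset.Icc 1 r).val.map
        (fun k => Module.finrank F (E k) - Module.finrank F (E (k - 1))) =
      (Finset.Icc 1 r).val.map (fun m => ∑ j ∈ Finset.Icc m r, d j)

/-
`E_k` is spanned by the first `c_k(j)` vectors `e(1,j,l), …, e(c_k(j),j,l)` of every Jordan
chain of length `j`, where `c_k(j) = #{m ∈ [1,k] : σ m ≤ j}` (`prefixCount`). Passing from
`k - 1` to `k`, `c_k(j)` grows by one exactly when `σ k ≤ j`, so `E_k / E_{k-1}` has one basis
vector for each chain of length at least `σ k`, and since `X` moves every chain down by one
step it maps `E_k` into `E_{k-1}`. Because `σ` permutes `[1,r]`, `c_r(j) = j`, so `E_r = V`,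
and the quotient dimensions are the numbers `Σ_{j ≥ m} d_j` permuted by `σ`.
-/

instance RIdx.instFinite (r : ℕ) (d : ℕ → ℕ) : Finite (RIdx r d) := by
  refine Set.Finite.to_subtype (Set.Finite.subset (Set.toFinite
    (Set.Icc 1 r ×ˢ Set.Icc 1 r ×ˢ Set.Icc 1 (∑ j ∈ Finset.range (r + 1), d j))) ?_)
  rintro ⟨i, j, k⟩ ⟨hi, hij, hj, hk, hkd⟩
  dsimp only at hi hij hj hk hkd
  have : d j ≤ ∑ j ∈ Finset.range (r + 1), d j :=
    Finset.single_le_sum (fun _ _ => Nat.zero_le _) (Finset.mem_range.2 (by omega))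
  simp only [Set.mem_prod, Set.mem_Icc]
  omega

instance (r : ℕ) (d : ℕ → ℕ) : DecidableEq (RIdx r d) := by
  unfold RIdx; infer_instance

noncomputable instance (r : ℕ) (d : ℕ → ℕ) : Fintype (RIdx r d) := Fintype.ofFinite _

theorem Module.Basis.finrank_span_image_finset {ι F V : Type*} [Field F] [AddCommGroup V]
    [Module F V] (e : Module.Basis ι F V) (s : Finset ι) :
    Module.finrank F (Submodule.span F (e '' s)) = s.card := by
  rw [← Subtype.range_coe (s := (s : Set ι)), ← Set.range_comp,
    finrank_span_eq_card (e.linearIndependent.comp _ Subtype.val_injective)]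
  simp only [SetLike.mem_coe, Fintype.card_coe]

namespace Richardson

def prefixCount (σ : ℕ → ℕ) (k j : ℕ) : ℕ :=
  ((Finset.Icc 1 k).filter (fun m => σ m ≤ j)).card

@[simp]
theorem prefixCount_zero (σ : ℕ → ℕ) (j : ℕ) : prefixCount σ 0 j = 0 := by
  simp [prefixCount]

theorem prefixCount_eq_sub_one_add {σ : ℕ → ℕ} {k : ℕ} (hk : 1 ≤ k) (j : ℕ) :
    prefixCount σ k j = prefixCount σ (k - 1) j + if σ k ≤ j then 1 else 0 := by
  have hnot : k ∉ Finset.Icc 1 (k - 1) := by rw [Finset.mem_Icc]; omega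
  unfold prefixCount
  rw [← Finset.insert_Icc_sub_one_right_eq_Icc hk, Finset.filter_insert]
  split_ifs
  · rw [Finset.card_insert_of_notMem (fun h => hnot (Finset.mem_of_mem_filter _ h))]
  · rfl

theorem prefixCount_mono (σ : ℕ → ℕ) (j : ℕ) : Monotone (prefixCount σ · j) :=
  fun _ _ hkl => Finset.card_le_card
    (Finset.filter_subset_filter _ (Finset.Icc_subset_Icc_right hkl))

variable {r : ℕ} {σ : Equiv.Perm ℕ}

theorem map_Icc_eq_self (hσ : ∀ k ∈ Finset.Icc 1 r, σ k ∈ Finset.Icc 1 r) :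
    (Finset.Icc 1 r).map σ.toEmbedding = Finset.Icc 1 r :=
  Finset.map_eq_of_subset fun _ hm => by
    obtain ⟨k, hk, rfl⟩ := Finset.mem_map.1 hm
    exact hσ k hk

theorem prefixCount_self (hσ : ∀ k ∈ Finset.Icc 1 r, σ k ∈ Finset.Icc 1 r) {j : ℕ}
    (hj : j ≤ r) : prefixCount σ r j = j := by
  have hfilter : (Finset.Icc 1 r).filter (· ≤ j) = Finset.Icc 1 j := by
    ext m; simp only [Finset.mem_filter, Finset.mem_Icc]; omega
  have hmap := Finset.filter_map (s := Finset.Icc 1 r) (f := σ.toEmbedding) (p := (· ≤ j))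
  rw [map_Icc_eq_self hσ, hfilter] at hmap
  rw [prefixCount, ← Finset.card_map σ.toEmbedding]
  exact (congrArg Finset.card hmap).symm.trans (Nat.card_Icc 1 j)

variable {d : ℕ → ℕ}

noncomputable def flagIdx (r : ℕ) (d : ℕ → ℕ) (σ : ℕ → ℕ) (k : ℕ) : Finset (RIdx r d) :=
  Finset.univ.filter fun x => x.val.1 ≤ prefixCount σ k x.val.2.1

theorem flagIdx_zero (σ : ℕ → ℕ) : flagIdx r d σ 0 = ∅ :=
  Finset.filter_false_of_mem fun x _ => by
    have := x.2.1
    simp only [prefixCount_zero]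
    omega

theorem flagIdx_eq_univ (hσ : ∀ k ∈ Finset.Icc 1 r, σ k ∈ Finset.Icc 1 r) :
    flagIdx r d σ r = Finset.univ :=
  Finset.filter_true_of_mem fun x _ => by
    obtain ⟨_, hij, hj, _⟩ := x.2
    rwa [prefixCount_self hσ hj]

theorem flagIdx_mono (σ : ℕ → ℕ) : Monotone (flagIdx r d σ) :=
  fun _ _ hkl => Finset.monotone_filter_right _ fun _ _ hx => hx.trans (prefixCount_mono σ _ hkl)

theorem mem_flagIdx_sdiff {σ : ℕ → ℕ} {k : ℕ} (hk : 1 ≤ k) {x : RIdx r d} :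
    x ∈ flagIdx r d σ k \ flagIdx r d σ (k - 1) ↔
      σ k ≤ x.val.2.1 ∧ x.val.1 = prefixCount σ k x.val.2.1 := by
  simp only [flagIdx, Finset.mem_sdiff, Finset.mem_filter, Finset.mem_univ, true_and,
    prefixCount_eq_sub_one_add hk]
  split_ifs <;> omega

theorem card_flagIdx_sdiff (hσ : ∀ k ∈ Finset.Icc 1 r, σ k ∈ Finset.Icc 1 r) {k : ℕ}
    (hk : k ∈ Finset.Icc 1 r) :
    (flagIdx r d σ k \ flagIdx r d σ (k - 1)).card = ∑ j ∈ Finset.Icc (σ k) r, d j := by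
  obtain ⟨hk1, hkr⟩ := Finset.mem_Icc.1 hk
  calc (flagIdx r d σ k \ flagIdx r d σ (k - 1)).card
      = ((Finset.Icc (σ k) r).sigma fun j => Finset.Icc 1 (d j)).card := by
        refine Finset.card_bij (fun x _ => ⟨x.val.2.1, x.val.2.2⟩) ?_ ?_ ?_
        · intro x hx
          obtain ⟨-, -, hjr, hk1', hkd⟩ := x.2
          have hσj := ((mem_flagIdx_sdiff hk1).1 hx).1
          simp only [Finset.mem_sigma, Finset.mem_Icc]
          exact ⟨⟨hσj, hjr⟩, hk1', hkd⟩
        · intro x hx y hy hxy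
          simp only [Sigma.mk.injEq, heq_eq_eq] at hxy
          have hxi := ((mem_flagIdx_sdiff hk1).1 hx).2
          have hyi := ((mem_flagIdx_sdiff hk1).1 hy).2
          exact Subtype.ext (Prod.ext (by rw [hxi, hyi, hxy.1]) (Prod.ext hxy.1 hxy.2))
        · rintro ⟨j, l⟩ hjl
          simp only [Finset.mem_sigma, Finset.mem_Icc] at hjl
          obtain ⟨⟨hσj, hjr⟩, hl1, hld⟩ := hjl
          have hpos : 1 ≤ prefixCount σ k j := by
            rw [prefixCount_eq_sub_one_add hk1, if_pos hσj]; omega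
          have hle : prefixCount σ k j ≤ j :=
            (prefixCount_mono σ j hkr).trans_eq (prefixCount_self hσ hjr)
          refine ⟨⟨(prefixCount σ k j, j, l), hpos, hle, hjr, hl1, hld⟩,
            (mem_flagIdx_sdiff hk1).2 ⟨hσj, rfl⟩, rfl⟩
    _ = ∑ j ∈ Finset.Icc (σ k) r, d j := by simp [Finset.card_sigma]

section Flag

variable {F V : Type*} [Field F] [AddCommGroup V] [Module F V] (e : Module.Basis (RIdx r d) F V)

noncomputable def flag (σ : ℕ → ℕ) (k : ℕ) : Submodule F V :=
  Submodule.span F (e '' flagIdx r d σ k)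

theorem finrank_flag_sub (hσ : ∀ k ∈ Finset.Icc 1 r, σ k ∈ Finset.Icc 1 r) {k : ℕ}
    (hk : k ∈ Finset.Icc 1 r) :
    Module.finrank F (flag e σ k) - Module.finrank F (flag e σ (k - 1)) =
      ∑ j ∈ Finset.Icc (σ k) r, d j := by
  rw [flag, flag, e.finrank_span_image_finset, e.finrank_span_image_finset,
    ← Finset.card_sdiff_of_subset (flagIdx_mono σ (Nat.sub_le k 1)), card_flagIdx_sdiff hσ hk]

theorem apply_mem_flag {X : V →ₗ[F] V} (hX0 : ∀ x : RIdx r d, x.val.1 = 1 → X (e x) = 0)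
    (hXs : ∀ x y : RIdx r d, x.val.1 = y.val.1 + 1 → x.val.2 = y.val.2 → X (e x) = e y)
    (σ : ℕ → ℕ) {k : ℕ} (hk : 1 ≤ k) {v : V} (hv : v ∈ flag e σ k) :
    X v ∈ flag e σ (k - 1) := by
  suffices flag e σ k ≤ (flag e σ (k - 1)).comap X from this hv
  refine Submodule.span_le.2 ?_
  rintro _ ⟨x, hx, rfl⟩
  obtain ⟨hi1, hij, hjr, hl1, hld⟩ := x.2
  rw [SetLike.mem_coe, Submodule.mem_comap]
  rcases eq_or_lt_of_le hi1 with hi | hi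
  · rw [hX0 x hi.symm]
    exact zero_mem _
  · obtain ⟨y, hyi, hyj⟩ : ∃ y : RIdx r d, x.val.1 = y.val.1 + 1 ∧ x.val.2 = y.val.2 :=
      ⟨⟨(x.val.1 - 1, x.val.2), by dsimp only; omega⟩, by dsimp only; omega, rfl⟩
    have hy : y ∈ flagIdx r d σ (k - 1) := by
      simp only [flagIdx, Finset.coe_filter, Finset.mem_univ, true_and, Set.mem_ofPred_eq,
        Finset.mem_filter] at hx ⊢
      rw [prefixCount_eq_sub_one_add hk, hyj] at hx
      split_ifs at hx <;> omega
    rw [hXs x y hyi hyj]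
    exact Submodule.subset_span ⟨y, hy, rfl⟩

theorem isRichardsonFlag_flag {X : V →ₗ[F] V} (hX0 : ∀ x : RIdx r d, x.val.1 = 1 → X (e x) = 0)
    (hXs : ∀ x y : RIdx r d, x.val.1 = y.val.1 + 1 → x.val.2 = y.val.2 → X (e x) = e y)
    (hσ : ∀ k ∈ Finset.Icc 1 r, σ k ∈ Finset.Icc 1 r) :
    IsRichardsonFlag X r d (flag e σ) := by
  refine ⟨?_, ?_, fun k _ => ?_, fun k hk _ _ => apply_mem_flag e hX0 hXs σ hk, ?_⟩
  · rw [flag, flagIdx_zero, Finset.coe_empty, Set.image_empty, Submodule.span_empty]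
  · rw [flag, flagIdx_eq_univ hσ, Finset.coe_univ, Set.image_univ, e.span_eq]
  · exact Submodule.span_mono (Set.image_mono (Finset.coe_subset.2 (flagIdx_mono σ k.le_succ)))
  · have hperm : (Finset.Icc 1 r).val.map σ = (Finset.Icc 1 r).val :=
      congrArg Finset.val (map_Icc_eq_self hσ)
    rw [Multiset.map_congr rfl fun k hk => finrank_flag_sub e hσ hk]
    exact (Multiset.map_map (fun m => ∑ j ∈ Finset.Icc m r, d j) σ _).symm.trans
      (congrArg _ hperm)

end Flag

end Richardson

open Richardson

theorem stmt_7_general (r : ℕ) (d : ℕ → ℕ)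
    (F : Type*) [Field F] (V : Type*) [AddCommGroup V] [Module F V]
    (e : Module.Basis (RIdx r d) F V) (X : V →ₗ[F] V)
    (hX0 : ∀ x : RIdx r d, x.val.1 = 1 → X (e x) = 0)
    (hXs : ∀ x y : RIdx r d, x.val.1 = y.val.1 + 1 → x.val.2 = y.val.2 →
      X (e x) = e y)
    (σ : Equiv.Perm ℕ) (hσ : ∀ k ∈ Finset.Icc 1 r, σ k ∈ Finset.Icc 1 r) :
    ∃ E : ℕ → Submodule F V, IsRichardsonFlag X r d E ∧
      ∀ k ∈ Finset.Icc 1 r,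
        Module.finrank F (E k) - Module.finrank F (E (k - 1)) =
          ∑ j ∈ Finset.Icc (σ k) r, d j :=
  ⟨flag e σ, isRichardsonFlag_flag e hX0 hXs hσ, fun _ hk => finrank_flag_sub e hσ hk⟩

/-- for every permutation `σ` of `{1,…,r}` there is a Richardson flag
for `X` whose successive quotient dimensions are `dim(E_k/E_{k−1}) = Σ_{j ≥ σ(k)} d_j`. -/
theorem stmt_7 (r : ℕ) (hr : 1 ≤ r) (d : ℕ → ℕ) (hd : 1 ≤ d r)
    (F : Type*) [Field F] [CharZero F] (V : Type*) [AddCommGroup V] [Module F V]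
    (e : Module.Basis (RIdx r d) F V) (X : V →ₗ[F] V)
    (hX0 : ∀ x : RIdx r d, x.val.1 = 1 → X (e x) = 0)
    (hXs : ∀ x y : RIdx r d, x.val.1 = y.val.1 + 1 → x.val.2 = y.val.2 →
      X (e x) = e y)
    (σ : Equiv.Perm ℕ) (hσ : ∀ k ∈ Finset.Icc 1 r, σ k ∈ Finset.Icc 1 r) :
    ∃ E : ℕ → Submodule F V, IsRichardsonFlag X r d E ∧
      ∀ k ∈ Finset.Icc 1 r,
        Module.finrank F (E k) - Module.finrank F (E (k - 1)) =
          ∑ j ∈ Finset.Icc (σ k) r, d j :=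
  stmt_7_general r d F V e X hX0 hXs σ hσ
end

section
/- Every Richardson flag (E_k)_{0 ≤ k ≤ r} for X is rational with respect to the standard basis: for each 0 ≤ k ≤ r, the subspace E_k is spanned by a subset of the basis {e(i,j,k)} of V. -/
/-!
By induction on `k` we show that `E k` is the span of the vectors `e(i,j,l)` with `i ≤ c j`
for some `c : ℕ → ℕ`, and that the remaining quotient dimensions `dim E t / E (t-1)`, `t > k`,
form the multiset of the numbers `D_c(u) = ∑_{c j + u < j} d j`, `u < r - k`.
If `dim E (k+1) / E k = D_c(m)`, pick later steps of the flag whose quotient dimensions are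
`D_c(0), …, D_c(m-1)`; pulling `E (k+1)` back along `X^m` through these steps gives
`dim X^{-m} E (k+1) ≥ dim E (k+1) + ∑_{u<m} D_c(u)`, and rank–nullity turns this into
`E (k+1) ≤ im X^m + E k`. Together with `E (k+1) ≤ X⁻¹ E k` this confines `E (k+1)` to the span
of the `e(i,j,l)` with `i ≤ c j + 1` if `c j + m < j` and `i ≤ c j` otherwise, which has the
same dimension `dim E k + D_c(m)`.
-/

open Finset Module Submodule

section FinrankInequalities

variable {F V W : Type*} [Field F] [AddCommGroup V] [Module F V] [AddCommGroup W] [Module F W]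
  [FiniteDimensional F V]

theorem finrank_map_add_finrank_ker_inf (f : V →ₗ[F] W) (P : Submodule F V) :
    finrank F (P.map f) + finrank F (LinearMap.ker f ⊓ P : Submodule F V) = finrank F P := by
  have h := LinearMap.finrank_range_add_finrank_ker (f.domRestrict P)
  rwa [LinearMap.range_domRestrict, LinearMap.ker_domRestrict, ← finrank_map_subtype_eq,
    map_comap_subtype, inf_comm] at h

theorem finrank_comap_inf_add_finrank_map (f : V →ₗ[F] W) (N : Submodule F W)
    (P : Submodule F V) :
    finrank F (N.comap f ⊓ P : Submodule F V) + finrank F (P.map f) =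
      finrank F (N ⊓ P.map f : Submodule F W) + finrank F P := by
  have hmap : (N.comap f ⊓ P).map f = N ⊓ P.map f := by
    refine le_antisymm ?_ ?_
    · rintro _ ⟨x, ⟨hxN, hxP⟩, rfl⟩
      exact ⟨hxN, x, hxP, rfl⟩
    · rintro _ ⟨hyN, x, hxP, rfl⟩
      exact ⟨x, ⟨hyN, hxP⟩, rfl⟩
  have hker : LinearMap.ker f ⊓ (N.comap f ⊓ P) = LinearMap.ker f ⊓ P := by
    rw [← inf_assoc, inf_eq_left.2 (LinearMap.ker_le_comap f)]
  have h1 := finrank_map_add_finrank_ker_inf f (N.comap f ⊓ P)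
  have h2 := finrank_map_add_finrank_ker_inf f P
  rw [hmap, hker] at h1
  omega

theorem finrank_inf_add_finrank_le_of_le (N : Submodule F V) {A Q : Submodule F V} (h : A ≤ Q) :
    finrank F (N ⊓ Q : Submodule F V) + finrank F A ≤
      finrank F (N ⊓ A : Submodule F V) + finrank F Q := by
  have hsup := finrank_sup_add_finrank_inf_eq (N ⊓ Q) A
  rw [inf_assoc, inf_eq_right.2 h] at hsup
  have := finrank_mono (sup_le inf_le_right h : N ⊓ Q ⊔ A ≤ Q)
  omega

theorem finrank_inf_add_finrank_le_finrank_comap_inf (f : V →ₗ[F] V) (N : Submodule F V)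
    {P Q : Submodule F V} (hPQ : P.map f ≤ Q) :
    finrank F (N ⊓ Q : Submodule F V) + finrank F P ≤
      finrank F (N.comap f ⊓ P : Submodule F V) + finrank F Q := by
  have h1 := finrank_comap_inf_add_finrank_map f N P
  have h2 := finrank_inf_add_finrank_le_of_le N hPQ
  omega

theorem le_range_sup_of_finrank_le (f : V →ₗ[F] V) {A B : Submodule F V} (hBA : B ≤ A)
    (h : finrank F V + finrank F (B ⊓ LinearMap.range f : Submodule F V) + finrank F A ≤
      finrank F (A.comap f) + finrank F B + finrank F (LinearMap.range f)) :
    A ≤ LinearMap.range f ⊔ B := by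
  have hrn := finrank_comap_inf_add_finrank_map f A ⊤
  rw [inf_top_eq, Submodule.map_top, finrank_top] at hrn
  have hmod := finrank_sup_add_finrank_inf_eq (A ⊓ LinearMap.range f) B
  rw [inf_right_comm, inf_eq_right.2 hBA] at hmod
  have hA : A ⊓ LinearMap.range f ⊔ B = A :=
    eq_of_le_of_finrank_le (sup_le inf_le_left hBA) (by omega)
  rw [← hA]
  exact sup_le_sup_right inf_le_right B

end FinrankInequalities

section Flags

variable {F V : Type*} [Field F] [AddCommGroup V] [Module F V]

noncomputable def finrankJump (E : ℕ → Submodule F V) (t : ℕ) : ℕ :=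
  finrank F (E t) - finrank F (E (t - 1))

theorem finrank_add_sum_le_finrank_comap_pow_inf [FiniteDimensional F V] (X : V →ₗ[F] V)
    (E : ℕ → Submodule F V) {k n : ℕ} (hkn : k ≤ n) (hmono : ∀ t ∈ Ioc k n, E (t - 1) ≤ E t)
    (hX : ∀ t ∈ Ioc k n, (E t).map X ≤ E (t - 1)) (S : Finset ℕ) (hS : S ⊆ Ioc k n) :
    finrank F (E k) + ∑ t ∈ S, finrankJump E t ≤
      finrank F ((E k).comap (X ^ #S) ⊓ E n : Submodule F V) := by
  induction n, hkn using Nat.le_induction generalizing S with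
  | base =>
    obtain rfl : S = ∅ := subset_empty.1 (Ioc_self k ▸ hS)
    rw [sum_empty, card_empty, add_zero, pow_zero, Module.End.one_eq_id, comap_id, inf_idem]
  | succ n hkn ih =>
    rw [← insert_Ioc_right_eq_Ioc_add_one hkn] at hS
    simp only [← insert_Ioc_right_eq_Ioc_add_one hkn, forall_mem_insert, Nat.add_sub_cancel]
      at hmono hX
    obtain ⟨hle, hmono⟩ := hmono
    obtain ⟨hXn, hX⟩ := hX
    by_cases hnS : n + 1 ∈ S
    · have hstep :=
        finrank_inf_add_finrank_le_finrank_comap_inf X ((E k).comap (X ^ #(S.erase (n + 1)))) hXn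
      rw [← comap_comp, ← Module.End.mul_eq_comp, ← pow_succ, card_erase_add_one hnS] at hstep
      have := ih hmono hX _ (subset_insert_iff.1 hS)
      have := finrank_mono hle
      rw [← sum_erase_add S _ hnS, finrankJump, Nat.add_sub_cancel]
      omega
    · exact (ih hmono hX S ((subset_insert_iff_of_notMem hnS).1 hS)).trans
        (finrank_mono (inf_le_inf_left _ hle))

end Flags

theorem Multiset.exists_le_map_eq_of_le_map {α β : Type*} {f : α → β} {s : Multiset α}
    {u : Multiset β} (h : u ≤ s.map f) : ∃ t ≤ s, t.map f = u := by
  induction s using Quotient.inductionOn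
  induction u using Quotient.inductionOn
  obtain ⟨w, hw, hsub⟩ := Multiset.coe_le.1 h
  obtain ⟨l, hl, rfl⟩ := List.sublist_map_iff.1 hsub
  exact ⟨l, hl.subperm, Multiset.coe_eq_coe.2 hw⟩

theorem Module.Basis.finrank_span_image {F V ι : Type*} [Field F] [AddCommGroup V] [Module F V]
    (e : Basis ι F V) (s : Set ι) : finrank F (span F (e '' s)) = s.ncard := by
  rw [finrank, ← Cardinal.toNat_toENat, toENat_rank_span_set (e.linearIndependent.linearIndepOn s),
    Set.ncard_def]

namespace RIdx

variable {r : ℕ} {d : ℕ → ℕ}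

theorem ext_iff {x y : RIdx r d} : x = y ↔ x.val = y.val := Subtype.ext_iff

theorem exists_pred (x : RIdx r d) (hx : x.val.1 ≠ 1) :
    ∃ y : RIdx r d, x.val.1 = y.val.1 + 1 ∧ x.val.2 = y.val.2 := by
  obtain ⟨h1, h2, h3, h4, h5⟩ := x.2
  exact ⟨⟨(x.val.1 - 1, x.val.2), by dsimp only; omega⟩, by dsimp only; omega, rfl⟩

end RIdx

namespace RichardsonFlag

def blockDim (r : ℕ) (d c : ℕ → ℕ) : ℕ := ∑ j ∈ Icc 1 r, min (c j) j * d j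

def blockJump (r : ℕ) (d c : ℕ → ℕ) (u : ℕ) : ℕ :=
  ∑ j ∈ Icc 1 r, if c j + u < j then d j else 0

def bump (c : ℕ → ℕ) (m : ℕ) (j : ℕ) : ℕ := if c j + m < j then c j + 1 else c j

variable {r : ℕ} {d : ℕ → ℕ}

theorem blockDim_add_blockJump {a b c : ℕ → ℕ} {u : ℕ}
    (h : ∀ j, min (b j) j = min (a j) j + if c j + u < j then 1 else 0) :
    blockDim r d a + blockJump r d c u = blockDim r d b := by
  rw [blockDim, blockDim, blockJump, ← sum_add_distrib]
  refine sum_congr rfl fun j _ => ?_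
  rw [← boole_mul, ← add_mul, h]

theorem blockDim_add_sum_blockJump (c : ℕ → ℕ) (s : ℕ) :
    blockDim r d c + ∑ u ∈ range s, blockJump r d c u = blockDim r d (fun j => c j + s) := by
  induction s with
  | zero => rfl
  | succ s ih =>
    rw [sum_range_succ, ← add_assoc, ih]
    exact blockDim_add_blockJump fun j => by split_ifs <;> omega

theorem blockDim_bump (c : ℕ → ℕ) (m : ℕ) :
    blockDim r d (bump c m) = blockDim r d c + blockJump r d c m :=
  (blockDim_add_blockJump fun j => by unfold bump; split_ifs <;> omega).symm

theorem blockJump_bump_of_lt (c : ℕ → ℕ) {m u : ℕ} (h : u < m) :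
    blockJump r d (bump c m) u = blockJump r d c u := by
  refine sum_congr rfl fun j _ => ?_
  unfold bump
  split_ifs <;> first | rfl | omega

theorem blockJump_bump_of_le (c : ℕ → ℕ) {m u : ℕ} (h : m ≤ u) :
    blockJump r d (bump c m) u = blockJump r d c (u + 1) := by
  refine sum_congr rfl fun j _ => ?_
  unfold bump
  split_ifs <;> first | rfl | omega

theorem map_blockJump_range (c : ℕ → ℕ) {m n : ℕ} (h : m ≤ n) :
    (Multiset.range (n + 1)).map (blockJump r d c) =
      blockJump r d c m ::ₘ (Multiset.range n).map (blockJump r d (bump c m)) := by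
  induction n, h using Nat.le_induction with
  | base =>
    rw [Multiset.range_succ, Multiset.map_cons]
    congr 1
    exact Multiset.map_congr rfl fun u hu => (blockJump_bump_of_lt c (Multiset.mem_range.1 hu)).symm
  | succ n hmn ih =>
    rw [Multiset.range_succ, Multiset.map_cons, ih, Multiset.range_succ, Multiset.map_cons,
      Multiset.cons_swap, blockJump_bump_of_le c hmn]

theorem blockJump_zero (u : ℕ) :
    blockJump r d (fun _ => 0) u = ∑ j ∈ Icc (u + 1) r, d j := by
  rw [blockJump, ← sum_filter]
  congr 1
  ext j
  simp only [mem_filter, mem_Icc]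
  omega

theorem blockDim_id_add_blockDim_min_le (c : ℕ → ℕ) (s : ℕ) :
    blockDim r d (fun j => j) + blockDim r d (fun j => min (c j) (j - s)) ≤
      blockDim r d (fun j => c j + s) + blockDim r d (fun j => j - s) := by
  simp only [blockDim, ← sum_add_distrib, ← add_mul]
  exact sum_le_sum fun j _ => Nat.mul_le_mul_right _ (by omega)

theorem blockDim_id_eq_add (s : ℕ) :
    blockDim r d (fun j => j) = blockDim r d (fun _ => s) + blockDim r d (fun j => j - s) := by
  simp only [blockDim, ← sum_add_distrib, ← add_mul]
  exact sum_congr rfl fun j _ => congrArg (· * d j) (by omega)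

def blockIdx (r : ℕ) (d c : ℕ → ℕ) : Finset (ℕ × ℕ × ℕ) :=
  ((Icc 1 r).sigma fun j => Icc 1 (min (c j) j) ×ˢ Icc 1 (d j)).image
    fun p => (p.2.1, p.1, p.2.2)

theorem mem_blockIdx {c : ℕ → ℕ} {p : ℕ × ℕ × ℕ} :
    p ∈ blockIdx r d c ↔
      (1 ≤ p.1 ∧ p.1 ≤ p.2.1 ∧ p.2.1 ≤ r ∧ 1 ≤ p.2.2 ∧ p.2.2 ≤ d p.2.1) ∧ p.1 ≤ c p.2.1 := by
  obtain ⟨i, j, k⟩ := p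
  simp only [blockIdx, mem_image, mem_sigma, mem_product, mem_Icc, Sigma.exists, Prod.exists,
    Prod.mk.injEq]
  constructor
  · rintro ⟨j, i, k, ⟨⟨hj, hjr⟩, ⟨hi, hic⟩, hk, hkd⟩, rfl, rfl, rfl⟩
    omega
  · rintro ⟨⟨hi, hij, hjr, hk, hkd⟩, hic⟩
    exact ⟨j, i, k, by omega, rfl, rfl, rfl⟩

theorem card_blockIdx (c : ℕ → ℕ) : #(blockIdx r d c) = blockDim r d c := by
  rw [blockIdx, card_image_of_injective, card_sigma, blockDim]
  · simp
  · rintro ⟨j, i, k⟩ ⟨j', i', k'⟩ h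
    simp only [Prod.mk.injEq] at h
    obtain ⟨rfl, rfl, rfl⟩ := h
    rfl

instance : Finite (RIdx r d) :=
  Finite.of_injective
    (fun x : RIdx r d => (⟨x.val, mem_blockIdx.2 ⟨x.2, x.2.2.1⟩⟩ : blockIdx r d id))
    fun _ _ h => Subtype.ext (congrArg (fun p : blockIdx r d id => p.val) h)

theorem ncard_setOf_le (c : ℕ → ℕ) :
    {x : RIdx r d | x.val.1 ≤ c x.val.2.1}.ncard = blockDim r d c := by
  refine (Set.ncard_image_of_injective _ Subtype.val_injective).symm.trans ?_
  rw [← card_blockIdx, ← Set.ncard_coe_finset]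
  congr 1
  ext p
  simp only [mem_coe, mem_blockIdx]
  exact ⟨by rintro ⟨x, hx, rfl⟩; exact ⟨x.2, hx⟩, fun h => ⟨⟨p, h.1⟩, h.2, rfl⟩⟩

variable {F V : Type*} [Field F] [AddCommGroup V] [Module F V]

def IsJordanBasis (e : Basis (RIdx r d) F V) (X : V →ₗ[F] V) : Prop :=
  (∀ x : RIdx r d, x.val.1 = 1 → X (e x) = 0) ∧
    ∀ x y : RIdx r d, x.val.1 = y.val.1 + 1 → x.val.2 = y.val.2 → X (e x) = e y

def blockSpan (e : Basis (RIdx r d) F V) (c : ℕ → ℕ) : Submodule F V :=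
  span F (e '' {x | x.val.1 ≤ c x.val.2.1})

section blockSpan

variable (e : Basis (RIdx r d) F V)

theorem finrank_blockSpan (c : ℕ → ℕ) : finrank F (blockSpan e c) = blockDim r d c := by
  rw [blockSpan, e.finrank_span_image, ncard_setOf_le]

theorem mem_blockSpan {c : ℕ → ℕ} {v : V} :
    v ∈ blockSpan e c ↔ ∀ x : RIdx r d, c x.val.2.1 < x.val.1 → e.repr v x = 0 := by
  rw [blockSpan, Basis.mem_span_image]
  refine ⟨fun h x hx => ?_, fun h x hx => ?_⟩
  · by_contra h0
    exact (h (Finsupp.mem_support_iff.2 h0)).not_gt hx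
  · by_contra hx'
    exact Finsupp.mem_support_iff.1 hx (h x (not_le.1 hx'))

theorem blockSpan_inf (c c' : ℕ → ℕ) :
    blockSpan e c ⊓ blockSpan e c' = blockSpan e (fun j => min (c j) (c' j)) := by
  ext v
  simp only [Submodule.mem_inf, mem_blockSpan, min_lt_iff, or_imp, forall_and]

theorem blockSpan_sup (c c' : ℕ → ℕ) :
    blockSpan e c ⊔ blockSpan e c' = blockSpan e (fun j => max (c j) (c' j)) := by
  simp only [blockSpan, ← span_union, ← Set.image_union, ← Set.ofPred_or, le_max_iff]

theorem blockSpan_zero : blockSpan e (fun _ => 0) = ⊥ := by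
  refine eq_bot_iff.2 fun v hv => ?_
  rw [mem_blockSpan] at hv
  exact (mem_bot F).2 (e.repr.map_eq_zero_iff.1 (Finsupp.ext fun x => hv x x.2.1))

theorem blockSpan_eq_top {c : ℕ → ℕ} (hc : ∀ j, j ≤ c j) : blockSpan e c = ⊤ := by
  refine eq_top_iff.2 fun v _ => (mem_blockSpan e).2 fun x hx => ?_
  exact absurd hx (not_lt.2 (x.2.2.1.trans (hc _)))

end blockSpan

theorem finrank_eq_blockDim (e : Basis (RIdx r d) F V) :
    finrank F V = blockDim r d (fun j => j) := by
  rw [← finrank_top, ← blockSpan_eq_top e fun _ => le_rfl, finrank_blockSpan]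

namespace IsJordanBasis

variable {e : Basis (RIdx r d) F V} {X : V →ₗ[F] V}

theorem repr_apply (hX : IsJordanBasis e X) (v : V) {x y : RIdx r d}
    (h1 : x.val.1 = y.val.1 + 1) (h2 : x.val.2 = y.val.2) : e.repr (X v) y = e.repr v x := by
  classical
  suffices e.coord y ∘ₗ X = e.coord x from LinearMap.congr_fun this v
  refine e.ext fun z => ?_
  simp only [LinearMap.comp_apply, Basis.coord_apply, Basis.repr_self]
  by_cases hz : z.val.1 = 1
  · rw [hX.1 z hz, map_zero, Finsupp.zero_apply, Finsupp.single_apply, if_neg]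
    rintro rfl
    have := y.2.1
    omega
  · obtain ⟨z', h1', h2'⟩ := RIdx.exists_pred z hz
    rw [hX.2 z z' h1' h2', Basis.repr_self, Finsupp.single_apply, Finsupp.single_apply]
    refine if_congr ?_ rfl rfl
    simp only [RIdx.ext_iff, Prod.ext_iff] at h2 h2' ⊢
    omega

theorem comap_blockSpan (hX : IsJordanBasis e X) (c : ℕ → ℕ) :
    (blockSpan e c).comap X = blockSpan e (fun j => c j + 1) := by
  refine le_antisymm (fun v hv => ?_) (span_le.2 ?_)
  · rw [mem_comap, mem_blockSpan] at hv
    rw [mem_blockSpan]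
    intro x hx
    obtain ⟨y, h1, h2⟩ := RIdx.exists_pred x (by omega)
    rw [← hX.repr_apply v h1 h2]
    exact hv y (by rw [← h2]; omega)
  · rintro _ ⟨x, hx, rfl⟩
    by_cases h1 : x.val.1 = 1
    · simp [hX.1 x h1]
    · obtain ⟨y, h1, h2⟩ := RIdx.exists_pred x h1
      rw [SetLike.mem_coe, mem_comap, hX.2 x y h1 h2]
      exact subset_span ⟨y, by simp only [Set.mem_ofPred_eq] at hx ⊢; rw [← h2]; omega, rfl⟩

theorem comap_pow_blockSpan (hX : IsJordanBasis e X) (c : ℕ → ℕ) (s : ℕ) :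
    (blockSpan e c).comap (X ^ s) = blockSpan e (fun j => c j + s) := by
  induction s with
  | zero => rw [pow_zero, Module.End.one_eq_id, comap_id]; rfl
  | succ s ih => rw [pow_succ, Module.End.mul_eq_comp, comap_comp, ih, hX.comap_blockSpan]; rfl

theorem range_pow (hX : IsJordanBasis e X) (s : ℕ) :
    LinearMap.range (X ^ s) = blockSpan e (fun j => j - s) := by
  have : FiniteDimensional F V := Module.Finite.of_basis e
  refine eq_of_le_of_finrank_eq (LinearMap.range_le_iff_comap.2 ?_) ?_
  · rw [hX.comap_pow_blockSpan, blockSpan_eq_top e fun j => by omega]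
  · have h := LinearMap.finrank_range_add_finrank_ker (X ^ s)
    rw [← comap_bot, ← blockSpan_zero e, hX.comap_pow_blockSpan, finrank_blockSpan,
      finrank_eq_blockDim e,
      blockDim_id_eq_add s] at h
    simp only [zero_add] at h
    rw [finrank_blockSpan]
    omega

theorem le_range_pow_sup_blockSpan (hX : IsJordanBasis e X) {A : Submodule F V}
    {c : ℕ → ℕ} {m : ℕ} (hcA : blockSpan e c ≤ A)
    (hA : finrank F A + ∑ u ∈ range m, blockJump r d c u ≤ finrank F (A.comap (X ^ m))) :
    A ≤ LinearMap.range (X ^ m) ⊔ blockSpan e c := by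
  have := Module.Finite.of_basis e
  refine le_range_sup_of_finrank_le _ hcA ?_
  have h1 := blockDim_add_sum_blockJump (r := r) (d := d) c m
  have h2 := blockDim_id_add_blockDim_min_le (r := r) (d := d) c m
  rw [finrank_eq_blockDim e, hX.range_pow, blockSpan_inf, finrank_blockSpan, finrank_blockSpan,
    finrank_blockSpan]
  omega

theorem comap_inf_range_pow_sup (hX : IsJordanBasis e X) (c : ℕ → ℕ) (m : ℕ) :
    (blockSpan e c).comap X ⊓ (LinearMap.range (X ^ m) ⊔ blockSpan e c) =
      blockSpan e (bump c m) := by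
  rw [hX.comap_blockSpan, hX.range_pow, blockSpan_sup, blockSpan_inf]
  congr 1
  funext j
  unfold bump
  split_ifs <;> omega

end IsJordanBasis

end RichardsonFlag

namespace IsRichardsonFlag

open RichardsonFlag

variable {r : ℕ} {d : ℕ → ℕ} {F V : Type*} [Field F] [AddCommGroup V] [Module F V]
  {e : Basis (RIdx r d) F V} {X : V →ₗ[F] V} {E : ℕ → Submodule F V}

theorem mono (hE : IsRichardsonFlag X r d E) {t : ℕ} (ht : t ∈ Ioc 0 r) : E (t - 1) ≤ E t := by
  obtain ⟨h0, htr⟩ := mem_Ioc.1 ht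
  simpa [Nat.sub_add_cancel h0] using hE.2.2.1 (t - 1) (by omega)

theorem map_le (hE : IsRichardsonFlag X r d E) {t : ℕ} (ht : t ∈ Ioc 0 r) :
    (E t).map X ≤ E (t - 1) :=
  map_le_iff_le_comap.2 fun v hv => hE.2.2.2.1 t (mem_Ioc.1 ht).1 (mem_Ioc.1 ht).2 v hv

theorem finrank_add_sum_le_finrank_comap_pow [FiniteDimensional F V]
    (hE : IsRichardsonFlag X r d E) {k m : ℕ} (hk : k ≤ r) {g : ℕ → ℕ}
    (hg : (Multiset.range m).map g ≤ (Icc (k + 1) r).val.map (finrankJump E)) :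
    finrank F (E k) + ∑ u ∈ range m, g u ≤ finrank F ((E k).comap (X ^ m)) := by
  rw [Icc_add_one_left_eq_Ioc] at hg
  obtain ⟨T, hT, hTg⟩ := Multiset.exists_le_map_eq_of_le_map hg
  let S : Finset ℕ := ⟨T, Multiset.nodup_of_le hT (Ioc k r).nodup⟩
  have hsub : Ioc k r ⊆ Ioc 0 r := Ioc_subset_Ioc_left (Nat.zero_le k)
  have h := finrank_add_sum_le_finrank_comap_pow_inf X E hk (fun t ht => hE.mono (hsub ht))
    (fun t ht => hE.map_le (hsub ht)) S fun t ht => Multiset.mem_of_le hT ht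
  have hcard : #S = m := by change T.card = m; simpa using congrArg Multiset.card hTg
  have hsum : ∑ t ∈ S, finrankJump E t = ∑ u ∈ range m, g u := congrArg Multiset.sum hTg
  rwa [hcard, hsum, hE.2.1, inf_top_eq] at h

theorem exists_bump (hX : IsJordanBasis e X) (hE : IsRichardsonFlag X r d E) {k : ℕ}
    (hk : k < r) {c : ℕ → ℕ} (hc : E k = blockSpan e c)
    (hmul : (Icc (k + 1) r).val.map (finrankJump E) =
      (Multiset.range (r - k)).map (blockJump r d c)) :
    ∃ m, E (k + 1) = blockSpan e (bump c m) ∧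
      (Icc (k + 1 + 1) r).val.map (finrankJump E) =
        (Multiset.range (r - (k + 1))).map (blockJump r d (bump c m)) := by
  have := Module.Finite.of_basis e
  obtain ⟨m, hm, hjump⟩ := Multiset.mem_map.1
    (hmul ▸ Multiset.mem_map_of_mem _ (left_mem_Icc.2 hk) : finrankJump E (k + 1) ∈ _)
  rw [Multiset.mem_range] at hm
  have hrest : (Icc (k + 1 + 1) r).val.map (finrankJump E) =
      (Multiset.range (r - (k + 1))).map (blockJump r d (bump c m)) := by
    rw [Icc_eq_cons_Ioc hk, cons_val, ← Icc_add_one_left_eq_Ioc, Multiset.map_cons,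
      show r - k = r - (k + 1) + 1 by omega, map_blockJump_range c (by omega : m ≤ r - (k + 1)),
      hjump] at hmul
    exact (Multiset.cons_inj_right _).1 hmul
  have hle : E k ≤ E (k + 1) := hE.mono (mem_Ioc.2 ⟨k.succ_pos, hk⟩)
  have hdim : finrank F (E (k + 1)) = blockDim r d c + blockJump r d c m := by
    have h := finrank_mono hle
    rw [hc, finrank_blockSpan] at h
    rw [hjump, finrankJump, Nat.add_sub_cancel, hc, finrank_blockSpan]
    omega
  have hsup : E (k + 1) ≤ LinearMap.range (X ^ m) ⊔ E k := by
    refine hc ▸ hX.le_range_pow_sup_blockSpan (hc ▸ hle)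
      (hE.finrank_add_sum_le_finrank_comap_pow hk ?_)
    rw [hrest, Multiset.map_congr rfl fun u hu =>
      (blockJump_bump_of_lt c (Multiset.mem_range.1 hu)).symm]
    exact Multiset.map_le_map (Multiset.range_le.2 (by omega))
  have hcomap : E (k + 1) ≤ (E k).comap X := fun v hv => hE.2.2.2.1 (k + 1) k.succ_pos hk v hv
  have hspan := hX.comap_inf_range_pow_sup c m
  rw [← hc] at hspan
  refine ⟨m, eq_of_le_of_finrank_le (hspan ▸ le_inf hcomap hsup) ?_, hrest⟩
  rw [finrank_blockSpan, blockDim_bump, hdim]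

theorem exists_blockSpan (hX : IsJordanBasis e X) (hE : IsRichardsonFlag X r d E) {k : ℕ}
    (hk : k ≤ r) : ∃ c, E k = blockSpan e c ∧
      (Icc (k + 1) r).val.map (finrankJump E) = (Multiset.range (r - k)).map (blockJump r d c) := by
  induction k with
  | zero =>
    refine ⟨fun _ => 0, by rw [hE.1, blockSpan_zero], hE.2.2.2.2.trans ?_⟩
    rw [← Ico_add_one_right_eq_Icc, ← zero_add 1, ← map_add_right_Ico, Nat.Ico_zero_eq_range,
      map_val, range_val, Multiset.map_map]
    exact Multiset.map_congr rfl fun u _ => (blockJump_zero u).symm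
  | succ k ih =>
    obtain ⟨c, hc, hmul⟩ := ih (by omega)
    obtain ⟨m, hE', hmul'⟩ := hE.exists_bump hX (by omega) hc hmul
    exact ⟨_, hE', hmul'⟩

end IsRichardsonFlag

theorem stmt_8_general (r : ℕ) (d : ℕ → ℕ)
    (F : Type*) [Field F] (V : Type*) [AddCommGroup V] [Module F V]
    (e : Module.Basis (RIdx r d) F V) (X : V →ₗ[F] V)
    (hX0 : ∀ x : RIdx r d, x.val.1 = 1 → X (e x) = 0)
    (hXs : ∀ x y : RIdx r d, x.val.1 = y.val.1 + 1 → x.val.2 = y.val.2 →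
      X (e x) = e y)
    (E : ℕ → Submodule F V) (hE : IsRichardsonFlag X r d E) :
    ∀ k ≤ r, ∃ s : Set (RIdx r d), E k = Submodule.span F (e '' s) := by
  intro k hk
  obtain ⟨c, hc, -⟩ := hE.exists_blockSpan ⟨hX0, hXs⟩ hk
  exact ⟨_, hc⟩

/-- every Richardson flag for `X` is rational with respect to the
standard basis: each `E_k` is the span of a subset of the basis vectors. -/
theorem stmt_8 (r : ℕ) (hr : 1 ≤ r) (d : ℕ → ℕ) (hd : 1 ≤ d r)
    (F : Type*) [Field F] [CharZero F] (V : Type*) [AddCommGroup V] [Module F V]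
    (e : Module.Basis (RIdx r d) F V) (X : V →ₗ[F] V)
    (hX0 : ∀ x : RIdx r d, x.val.1 = 1 → X (e x) = 0)
    (hXs : ∀ x y : RIdx r d, x.val.1 = y.val.1 + 1 → x.val.2 = y.val.2 →
      X (e x) = e y)
    (E : ℕ → Submodule F V) (hE : IsRichardsonFlag X r d E) :
    ∀ k ≤ r, ∃ s : Set (RIdx r d), E k = Submodule.span F (e '' s) :=
  stmt_8_general r d F V e X hX0 hXs E hE
end

section
/- The normalizer of M in GL(V) equals M if and only if the dimensions dim_F U_1, …, dim_F U_r are pairwise distinct. -/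
/-!
An automorphism permuting the blocks `U i` normalizes `M`; when two blocks have the same
dimension, the automorphism exchanging them lies in the normalizer but not in `M`.

Conversely, if `g` normalizes `M`, every `g (U m)` is `M`-stable. The automorphism scaling `U j`
by `2` and fixing the other blocks lies in `M`, so an `M`-stable subspace contains the
`U j`-components of its vectors; as `GL (U j) ⊆ M` is transitive on nonzero vectors, it contains
all of `U j` once one such component is nonzero. Hence `U (σ m) ≤ g (U m)` for an injective `σ`,
and summing `dim U (σ m) ≤ dim U m` over all `m` turns each inequality into an equality.
Distinct dimensions then give `σ = id`, so `g (U m) = U m`.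
-/

open Module

namespace DirectSum.IsInternal

variable {R ι V N : Type*} [Semiring R] [DecidableEq ι] [AddCommMonoid V] [Module R V]
  [AddCommMonoid N] [Module R N] {U : ι → Submodule R V}

noncomputable def lift (hU : IsInternal U) (f : ∀ i, U i →ₗ[R] N) : V →ₗ[R] N :=
  toModule R ι N f ∘ₗ (LinearEquiv.ofBijective (coeLinearMap U) hU).symm.toLinearMap

noncomputable def proj (hU : IsInternal U) (j : ι) : V →ₗ[R] U j :=
  component R ι (fun i ↦ U i) j ∘ₗ
    (LinearEquiv.ofBijective (coeLinearMap U) hU).symm.toLinearMap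

theorem lift_apply_of_mem (hU : IsInternal U) (f : ∀ i, U i →ₗ[R] N) {i : ι} {x : V}
    (hx : x ∈ U i) : hU.lift f x = f i ⟨x, hx⟩ := by
  have : (LinearEquiv.ofBijective (coeLinearMap U) hU).symm x =
      lof R ι (fun i ↦ U i) i ⟨x, hx⟩ :=
    LinearEquiv.symm_apply_eq _ |>.mpr (coeLinearMap_lof U i ⟨x, hx⟩).symm
  simp [lift, this, toModule_lof]

theorem proj_apply_of_mem_self (hU : IsInternal U) {j : ι} {x : V} (hx : x ∈ U j) :
    hU.proj j x = ⟨x, hx⟩ :=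
  hU.ofBijective_coeLinearMap_of_mem hx

theorem proj_apply_of_mem_of_ne (hU : IsInternal U) {i j : ι} (hij : i ≠ j) {x : V}
    (hx : x ∈ U i) : hU.proj j x = 0 :=
  hU.ofBijective_coeLinearMap_of_mem_ne hij hx

theorem eq_zero_of_forall_proj_eq_zero (hU : IsInternal U) {x : V} (h : ∀ j, hU.proj j x = 0) :
    x = 0 := by
  have : (LinearEquiv.ofBijective (coeLinearMap U) hU).symm x = 0 := DFinsupp.ext h
  simpa using this

theorem linearMap_ext (hU : IsInternal U) {f g : V →ₗ[R] N} (h : ∀ i (x : U i), f x = g x) :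
    f = g := by
  set e := LinearEquiv.ofBijective (coeLinearMap U) hU
  have : f ∘ₗ e.toLinearMap = g ∘ₗ e.toLinearMap :=
    DirectSum.linearMap_ext R fun i ↦ LinearMap.ext fun x ↦ by
      change f (coeLinearMap U _) = g (coeLinearMap U _)
      rw [coeLinearMap_lof]
      exact h i x
  ext x
  simpa using congr($this (e.symm x))

theorem lift_surjective (hU : IsInternal U) {σ : ι → ι} (hσ : Function.Surjective σ)
    (e : ∀ i, U i ≃ₗ[R] U (σ i)) :
    Function.Surjective (hU.lift fun i ↦ (U (σ i)).subtype ∘ₗ (e i).toLinearMap) := by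
  rw [← LinearMap.range_eq_top, eq_top_iff, ← hU.submodule_iSup_eq_top, ← hσ.iSup_comp]
  refine iSup_le fun i y hy ↦ ⟨(e i).symm ⟨y, hy⟩, ?_⟩
  rw [hU.lift_apply_of_mem _ ((e i).symm ⟨y, hy⟩).2]
  simp

end DirectSum.IsInternal

theorem LinearEquiv.exists_apply_eq_of_ne_zero {K W : Type*} [DivisionRing K] [AddCommGroup W]
    [Module K W] {x y : W} (hx : x ≠ 0) (hy : y ≠ 0) : ∃ φ : W ≃ₗ[K] W, φ x = y := by
  obtain ⟨φ, hφ⟩ := Submodule.exists_linearEquiv_restrict_eq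
    ((toSpanNonzeroSingleton K W x hx).symm.trans (toSpanNonzeroSingleton K W y hy))
  refine ⟨φ, ?_⟩
  rw [← hφ ⟨x, Submodule.mem_span_singleton_self x⟩, LinearEquiv.trans_apply,
    ← toSpanNonzeroSingleton_one K W x hx, LinearEquiv.symm_apply_apply,
    toSpanNonzeroSingleton_one]

theorem Function.Injective.eq_of_forall_comp_le {ι α : Type*} [Finite ι] [AddCommMonoid α]
    [PartialOrder α] [IsOrderedCancelAddMonoid α] {σ : ι → ι} (hσ : σ.Injective)
    {f : ι → α} (hle : ∀ i, f (σ i) ≤ f i) (i : ι) : f (σ i) = f i := by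
  have := Fintype.ofFinite ι
  have hsum : ∑ i, f (σ i) = ∑ i, f i :=
    Equiv.sum_comp (Equiv.ofBijective σ (Finite.injective_iff_bijective.mp hσ)) f
  exact (Finset.sum_eq_sum_iff_of_le fun i _ ↦ hle i).mp hsum i (Finset.mem_univ i)

section Levi

variable {F ι V : Type*} [Field F] [AddCommGroup V] [Module F V]

def leviSubgroup (U : ι → Submodule F V) : Subgroup (V ≃ₗ[F] V) where
  carrier := {g | ∀ i, (U i).map (g : V →ₗ[F] V) = U i}
  mul_mem' {g h} hg hh i := by
    rw [LinearEquiv.coe_toLinearMap_mul, Module.End.mul_eq_comp, Submodule.map_comp, hh, hg]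
  one_mem' i := by simp
  inv_mem' {g} hg i := (Submodule.map_symm_eq_iff g).mpr (hg i)

variable {U : ι → Submodule F V}

theorem conj_mem_leviSubgroup {g n : V ≃ₗ[F] V} (σ : ι ≃ ι)
    (hg : ∀ i, (U i).map (g : V →ₗ[F] V) = U (σ i)) (hn : n ∈ leviSubgroup U) :
    g * n * g⁻¹ ∈ leviSubgroup U := by
  intro i
  have hinv : (U i).map (g⁻¹ : V ≃ₗ[F] V).toLinearMap = U (σ.symm i) :=
    (Submodule.map_symm_eq_iff g).mpr (by rw [hg, σ.apply_symm_apply])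
  simp only [LinearEquiv.coe_toLinearMap_mul, Module.End.mul_eq_comp, Submodule.map_comp, hinv,
    hn _, hg, σ.apply_symm_apply]

theorem mem_normalizer_leviSubgroup {g : V ≃ₗ[F] V} (σ : ι ≃ ι)
    (hg : ∀ i, (U i).map (g : V →ₗ[F] V) = U (σ i)) :
    g ∈ Subgroup.normalizer (leviSubgroup U : Set (V ≃ₗ[F] V)) := by
  have hg' (i : ι) : (U i).map (g⁻¹ : V ≃ₗ[F] V).toLinearMap = U (σ.symm i) :=
    (Submodule.map_symm_eq_iff g).mpr (by rw [hg, σ.apply_symm_apply])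
  refine fun n ↦ ⟨conj_mem_leviSubgroup σ hg, fun hn ↦ ?_⟩
  simpa [mul_assoc] using conj_mem_leviSubgroup σ.symm hg' hn

theorem map_mem_of_mem_normalizer_leviSubgroup {g n : V ≃ₗ[F] V}
    (hg : g ∈ Subgroup.normalizer (leviSubgroup U : Set (V ≃ₗ[F] V)))
    (hn : n ∈ leviSubgroup U) (i : ι) {x : V} (hx : x ∈ (U i).map (g : V →ₗ[F] V)) :
    n x ∈ (U i).map (g : V →ₗ[F] V) := by
  obtain ⟨y, hy, rfl⟩ := hx
  have hconj : g⁻¹ * n * g ∈ leviSubgroup U :=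
    (Subgroup.mem_set_normalizer_iff''.mp hg n).mp hn
  refine ⟨(g⁻¹ * n * g) y, hconj i ▸ Submodule.mem_map_of_mem hy, ?_⟩
  simp

end Levi

namespace DirectSum.IsInternal

variable {F ι V : Type*} [Field F] [DecidableEq ι] [AddCommGroup V] [Module F V]
  [FiniteDimensional F V] {U : ι → Submodule F V}

noncomputable def permEquiv (hU : IsInternal U) {σ : ι → ι} (hσ : Function.Surjective σ)
    (e : ∀ i, U i ≃ₗ[F] U (σ i)) : V ≃ₗ[F] V :=
  LinearEquiv.ofBijective _
    ⟨LinearMap.injective_iff_surjective.mpr (hU.lift_surjective hσ e),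
      hU.lift_surjective hσ e⟩

theorem permEquiv_apply_of_mem (hU : IsInternal U) {σ : ι → ι} (hσ : Function.Surjective σ)
    (e : ∀ i, U i ≃ₗ[F] U (σ i)) {i : ι} {x : V} (hx : x ∈ U i) :
    hU.permEquiv hσ e x = e i ⟨x, hx⟩ :=
  hU.lift_apply_of_mem _ hx

theorem map_permEquiv (hU : IsInternal U) {σ : ι → ι} (hσ : Function.Surjective σ)
    (e : ∀ i, U i ≃ₗ[F] U (σ i)) (i : ι) :
    (U i).map (hU.permEquiv hσ e : V →ₗ[F] V) = U (σ i) := by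
  refine le_antisymm ?_ fun y hy ↦ ⟨(e i).symm ⟨y, hy⟩, ((e i).symm ⟨y, hy⟩).2, ?_⟩
  · rintro _ ⟨x, hx, rfl⟩
    simp [hU.permEquiv_apply_of_mem hσ e hx]
  · simp [hU.permEquiv_apply_of_mem hσ e ((e i).symm ⟨y, hy⟩).2]

-- `σ` is a lambda rather than `id` so that `U (σ i)` beta-reduces to `U i`.
noncomputable def blockEquiv (hU : IsInternal U) (j : ι) (φ : U j ≃ₗ[F] U j) :
    V ≃ₗ[F] V :=
  hU.permEquiv (σ := fun i ↦ i) Function.surjective_id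
    (Function.update (fun i ↦ .refl F (U i)) j φ)

theorem blockEquiv_mem_leviSubgroup (hU : IsInternal U) (j : ι) (φ : U j ≃ₗ[F] U j) :
    hU.blockEquiv j φ ∈ leviSubgroup U :=
  hU.map_permEquiv _ _

theorem blockEquiv_apply_coe (hU : IsInternal U) (j : ι) (φ : U j ≃ₗ[F] U j) (x : U j) :
    hU.blockEquiv j φ x = φ x := by
  rw [blockEquiv, hU.permEquiv_apply_of_mem _ _ x.2, Function.update_self]

theorem blockEquiv_apply_sub_self (hU : IsInternal U) (j : ι) (φ : U j ≃ₗ[F] U j) (x : V) :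
    hU.blockEquiv j φ x - x = φ (hU.proj j x) - hU.proj j x := by
  have key : (hU.blockEquiv j φ : V →ₗ[F] V) - LinearMap.id =
      (U j).subtype ∘ₗ (φ.toLinearMap - LinearMap.id) ∘ₗ hU.proj j := by
    refine hU.linearMap_ext fun i x ↦ ?_
    rcases eq_or_ne i j with rfl | hij
    · simp [blockEquiv_apply_coe, hU.proj_apply_of_mem_self x.2]
    · rw [LinearMap.sub_apply, blockEquiv, LinearEquiv.coe_coe,
        hU.permEquiv_apply_of_mem _ _ x.2, Function.update_of_ne hij]
      simp [hU.proj_apply_of_mem_of_ne hij x.2]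
  simpa using congr($key x)

theorem exists_le_of_leviSubgroup_invariant [NeZero (2 : F)] (hU : IsInternal U)
    {W : Submodule F V} (hW : ∀ g ∈ leviSubgroup U, ∀ x ∈ W, g x ∈ W) (hW0 : W ≠ ⊥) :
    ∃ j, U j ≤ W := by
  obtain ⟨w, hwW, hw0⟩ := W.ne_bot_iff.mp hW0
  obtain ⟨j, hj⟩ : ∃ j, hU.proj j w ≠ 0 := by
    by_contra! h
    exact hw0 (hU.eq_zero_of_forall_proj_eq_zero h)
  have hprojW : (hU.proj j w : V) ∈ W := by
    have := hU.blockEquiv_apply_sub_self j (.smulOfNeZero F (U j) 2 two_ne_zero) w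
    rw [LinearEquiv.smulOfNeZero_apply, two_smul, Submodule.coe_add, add_sub_cancel_right] at this
    exact this ▸ sub_mem (hW _ (hU.blockEquiv_mem_leviSubgroup j _) w hwW) hwW
  refine ⟨j, fun v hv ↦ ?_⟩
  rcases eq_or_ne v 0 with rfl | hv0
  · exact W.zero_mem
  obtain ⟨φ, hφ⟩ :=
    LinearEquiv.exists_apply_eq_of_ne_zero (K := F) hj (y := ⟨v, hv⟩) (by simpa using hv0)
  have := hW _ (hU.blockEquiv_mem_leviSubgroup j φ) _ hprojW
  rwa [hU.blockEquiv_apply_coe, hφ] at this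

theorem normalizer_leviSubgroup_le [NeZero (2 : F)] [Finite ι] (hU : IsInternal U)
    (hUne : ∀ i, U i ≠ ⊥) (hdist : Pairwise fun i j ↦ finrank F (U i) ≠ finrank F (U j)) :
    Subgroup.normalizer (leviSubgroup U : Set (V ≃ₗ[F] V)) ≤ leviSubgroup U := by
  intro g hg
  have hW (m : ι) : ∃ j, U j ≤ (U m).map (g : V →ₗ[F] V) :=
    hU.exists_le_of_leviSubgroup_invariant
      (fun _ hn _ ↦ map_mem_of_mem_normalizer_leviSubgroup hg hn m) (by simpa using hUne m)
  choose σ hσ using hW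
  have hσinj : σ.Injective := by
    intro a b hab
    by_contra hne
    have hdisj := Submodule.disjoint_map g.injective (hU.submodule_iSupIndep.pairwiseDisjoint hne)
    exact hUne (σ a) (le_bot_iff.mp (hdisj (hσ a) (hab ▸ hσ b)))
  have hrank : ∀ m, finrank F (U (σ m)) = finrank F (U m) :=
    hσinj.eq_of_forall_comp_le (f := fun i ↦ finrank F (U i)) fun m ↦
      (Submodule.finrank_mono (hσ m)).trans_eq (LinearEquiv.finrank_map_eq g (U m))
  intro m
  have hσm : σ m = m := by_contra fun h ↦ hdist h (hrank m)
  refine (Submodule.eq_of_le_of_finrank_eq (by simpa only [hσm] using hσ m) ?_).symm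
  rw [LinearEquiv.finrank_map_eq]

theorem exists_mem_normalizer_not_mem_leviSubgroup (hU : IsInternal U) (hUne : ∀ i, U i ≠ ⊥)
    {m m' : ι} (hne : m ≠ m') (hrank : finrank F (U m) = finrank F (U m')) :
    ∃ g ∈ Subgroup.normalizer (leviSubgroup U : Set (V ≃ₗ[F] V)), g ∉ leviSubgroup U := by
  have he (i : ι) : finrank F (U i) = finrank F (U (Equiv.swap m m' i)) := by
    rcases eq_or_ne i m with rfl | him
    · rw [Equiv.swap_apply_left, hrank]
    rcases eq_or_ne i m' with rfl | him'
    · rw [Equiv.swap_apply_right, hrank]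
    · rw [Equiv.swap_apply_of_ne_of_ne him him']
  set g := hU.permEquiv (Equiv.swap m m').surjective fun i ↦ .ofFinrankEq _ _ (he i)
  refine ⟨g, mem_normalizer_leviSubgroup (Equiv.swap m m') (hU.map_permEquiv _ _),
    fun hg ↦ ?_⟩
  have : U m' = U m := by simpa [g, hU.map_permEquiv] using hg m
  have hdisj : Disjoint (U m) (U m') := hU.submodule_iSupIndep.pairwiseDisjoint hne
  rw [this] at hdisj
  exact hUne m (disjoint_self.mp hdisj)

end DirectSum.IsInternal

theorem stmt_9_general (F : Type*) [Field F] [CharZero F]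
    (V : Type*) [AddCommGroup V] [Module F V] [FiniteDimensional F V]
    (r : ℕ) (U : Fin r → Submodule F V)
    (hU : DirectSum.IsInternal U) (hUne : ∀ m, U m ≠ ⊥) :
    (Subgroup.setNormalizer
        {g : V ≃ₗ[F] V | ∀ m, (U m).map (g : V →ₗ[F] V) = U m} : Set (V ≃ₗ[F] V)) =
      {g : V ≃ₗ[F] V | ∀ m, (U m).map (g : V →ₗ[F] V) = U m} ↔
    ∀ m m' : Fin r, m ≠ m' →
      Module.finrank F (U m) ≠ Module.finrank F (U m') := by
  change (Subgroup.normalizer (leviSubgroup U : Set (V ≃ₗ[F] V)) : Set (V ≃ₗ[F] V)) =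
    leviSubgroup U ↔ _
  rw [SetLike.coe_set_eq]
  constructor
  · intro h m m' hne hrank
    obtain ⟨g, hgN, hgM⟩ := hU.exists_mem_normalizer_not_mem_leviSubgroup hUne hne hrank
    exact hgM (h ▸ hgN)
  · intro hdist
    exact le_antisymm (hU.normalizer_leviSubgroup_le hUne hdist) Subgroup.le_normalizer

/-- for `V = U_1 ⊕ ⋯ ⊕ U_r` a direct sum of nonzero subspaces and
`M ⊆ GL(V)` the subgroup of automorphisms preserving each `U_m` (a Levi subgroup),
the normalizer of `M` in `GL(V)` equals `M` iff the dimensions of the `U_m` are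
pairwise distinct. -/
theorem stmt_9 (F : Type*) [Field F] [CharZero F]
    (V : Type*) [AddCommGroup V] [Module F V] [FiniteDimensional F V] [Nontrivial V]
    (r : ℕ) (hr : 1 ≤ r) (U : Fin r → Submodule F V)
    (hU : DirectSum.IsInternal U) (hUne : ∀ m, U m ≠ ⊥) :
    (Subgroup.setNormalizer
        {g : V ≃ₗ[F] V | ∀ m, (U m).map (g : V →ₗ[F] V) = U m} : Set (V ≃ₗ[F] V)) =
      {g : V ≃ₗ[F] V | ∀ m, (U m).map (g : V →ₗ[F] V) = U m} ↔
    ∀ m m' : Fin r, m ≠ m' →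
      Module.finrank F (U m) ≠ Module.finrank F (U m') :=
  stmt_9_general F V r U hU hUne
end

section
/- For every Y ∈ End_F(V) commuting with X and every j ∈ J, one has Y(V_j^j) ⊆ Ker(X^j); and the F-linear map sending such a Y to the tuple (Y|_{V_j^j})_{j∈J} is a bijection from the centralizer {Y ∈ End_F(V) : Y ∘ X = X ∘ Y} onto the product ∏_{j∈J} Hom_F(V_j^j, Ker(X^j)). -/
/-- The subspace `V_j^i`, spanned by the basis vectors `e(i,j,k)`, `1 ≤ k ≤ d j`. -/
def Vsub {F : Type*} [Field F] {V : Type*} [AddCommGroup V] [Module F V]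
    (r : ℕ) (d : ℕ → ℕ) (e : Module.Basis (RIdx r d) F V) (i j : ℕ) : Submodule F V :=
  Submodule.span F {v | ∃ x : RIdx r d, x.val.1 = i ∧ x.val.2.1 = j ∧ v = e x}

/-!
Write `e(i,j,k)` for the basis. Each chain `e(j,j,k) ↦ e(j-1,j,k) ↦ ⋯ ↦ e(1,j,k) ↦ 0` is a
Jordan block of `X`, so `e(i,j,k) = X^(j-i) e(j,j,k)` and `X^j` kills `V_j^j`. An endomorphism `Y`
commuting with `X` is therefore determined by the images of the top vectors `e(j,j,k)`, and these
images lie in `Ker(X^j)`. Conversely, given maps `φ_j : V_j^j → Ker(X^j)`, the endomorphism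
`e(i,j,k) ↦ X^(j-i) φ_j(e(j,j,k))` commutes with `X`: at the bottom row `i = 1` this is exactly
`X^j φ_j(e(j,j,k)) = 0`.
-/

lemma Module.End.apply_pow_apply_of_comp_eq {R M : Type*} [Semiring R] [AddCommMonoid M]
    [Module R M] {X Y : Module.End R M} (h : Y ∘ₗ X = X ∘ₗ Y) (n : ℕ) (v : M) :
    Y ((X ^ n) v) = (X ^ n) (Y v) :=
  LinearMap.congr_fun (Commute.pow_right h n).eq v

lemma Module.End.apply_mem_ker_pow_of_comp_eq {R M : Type*} [Semiring R] [AddCommMonoid M]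
    [Module R M] {X Y : Module.End R M} (h : Y ∘ₗ X = X ∘ₗ Y) (n : ℕ) {v : M}
    (hv : v ∈ LinearMap.ker (X ^ n)) : Y v ∈ LinearMap.ker (X ^ n) := by
  rw [LinearMap.mem_ker] at hv ⊢
  rw [← Module.End.apply_pow_apply_of_comp_eq h, hv, map_zero]

namespace RIdx

variable {r : ℕ} {d : ℕ → ℕ}

def withRow (x : RIdx r d) (i : ℕ) (h₁ : 1 ≤ i) (h₂ : i ≤ x.val.2.1) : RIdx r d :=
  ⟨(i, x.val.2), h₁, h₂, x.prop.2.2⟩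

def top (x : RIdx r d) : RIdx r d :=
  x.withRow x.val.2.1 (x.prop.1.trans x.prop.2.1) le_rfl

def block (x : RIdx r d) : {j : ℕ // j ∈ Finset.Icc 1 r ∧ d j ≠ 0} :=
  ⟨x.val.2.1, Finset.mem_Icc.mpr ⟨x.prop.1.trans x.prop.2.1, x.prop.2.2.1⟩,
    by have := x.prop.2.2.2; omega⟩

lemma top_eq_self {x : RIdx r d} (h : x.val.1 = x.val.2.1) : x.top = x :=
  Subtype.ext (Prod.ext h.symm rfl)

end RIdx

section JordanBasis

open RIdx

variable {r : ℕ} {d : ℕ → ℕ} {F : Type*} [Field F] {V : Type*} [AddCommGroup V] [Module F V]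
  {e : Module.Basis (RIdx r d) F V} {X : Module.End F V}

def LowersRows (e : Module.Basis (RIdx r d) F V) (X : Module.End F V) : Prop :=
  ∀ x y : RIdx r d, x.val.1 = y.val.1 + 1 → x.val.2 = y.val.2 → X (e x) = e y

def KillsFirstRow (e : Module.Basis (RIdx r d) F V) (X : Module.End F V) : Prop :=
  ∀ x : RIdx r d, x.val.1 = 1 → X (e x) = 0

lemma basis_top_mem_Vsub (e : Module.Basis (RIdx r d) F V) (x : RIdx r d) :
    e x.top ∈ Vsub r d e x.val.2.1 x.val.2.1 :=
  Submodule.subset_span ⟨x.top, rfl, rfl, rfl⟩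

lemma pow_apply_basis_of_row_eq_add (hXs : LowersRows e X) (m : ℕ)
    {x y : RIdx r d} (h₁ : x.val.1 = y.val.1 + m) (h₂ : x.val.2 = y.val.2) :
    (X ^ m) (e x) = e y := by
  induction m generalizing x with
  | zero => rw [pow_zero, Module.End.one_apply, Subtype.ext (Prod.ext h₁ h₂)]
  | succ m ih =>
    have := y.prop.1
    have := x.prop.2.1
    rw [pow_succ, Module.End.mul_apply, hXs x (x.withRow (y.val.1 + m) (by omega) (by omega))
      (by simp only [withRow]; omega) rfl]
    exact ih rfl h₂

lemma basis_eq_pow_apply_top (hXs : LowersRows e X) (x : RIdx r d) :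
    (X ^ (x.val.2.1 - x.val.1)) (e x.top) = e x :=
  pow_apply_basis_of_row_eq_add hXs _ (by have := x.prop.2.1; simp only [top, withRow]; omega) rfl

lemma pow_row_apply_basis (hX0 : KillsFirstRow e X) (hXs : LowersRows e X)
    (x : RIdx r d) : (X ^ x.val.1) (e x) = 0 := by
  have hi := x.prop.1
  let bottom := x.withRow 1 le_rfl (hi.trans x.prop.2.1)
  rw [show x.val.1 = (x.val.1 - 1) + 1 by omega, pow_succ', Module.End.mul_apply,
    pow_apply_basis_of_row_eq_add hXs _ (x := x) (y := bottom)
      (by simp only [bottom, withRow]; omega) rfl, hX0 bottom rfl]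

lemma Vsub_le_ker_pow (hX0 : KillsFirstRow e X) (hXs : LowersRows e X)
    (i j : ℕ) : Vsub r d e i j ≤ LinearMap.ker (X ^ i) :=
  Submodule.span_le.mpr <| by
    rintro _ ⟨x, rfl, -, rfl⟩
    exact pow_row_apply_basis hX0 hXs x

lemma ext_of_comp_eq_of_apply_top (hXs : LowersRows e X) {Y Y' : Module.End F V}
    (hY : Y ∘ₗ X = X ∘ₗ Y) (hY' : Y' ∘ₗ X = X ∘ₗ Y')
    (h : ∀ x : RIdx r d, Y (e x.top) = Y' (e x.top)) : Y = Y' := by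
  refine e.ext fun x => ?_
  rw [← basis_eq_pow_apply_top hXs x, Module.End.apply_pow_apply_of_comp_eq hY,
    Module.End.apply_pow_apply_of_comp_eq hY', h]

abbrev BlockMaps (e : Module.Basis (RIdx r d) F V) (X : Module.End F V) : Type _ :=
  (j : {j : ℕ // j ∈ Finset.Icc 1 r ∧ d j ≠ 0}) →
    (↥(Vsub r d e (j : ℕ) (j : ℕ)) →ₗ[F] ↥(LinearMap.ker (X ^ (j : ℕ))))

noncomputable def topLift (φ : BlockMaps e X) : Module.End F V :=
  e.constr F fun x => (X ^ (x.val.2.1 - x.val.1)) (φ x.block ⟨e x.top, basis_top_mem_Vsub e x⟩)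

lemma topLift_apply_basis (φ : BlockMaps e X) (x : RIdx r d) :
    topLift φ (e x) =
      (X ^ (x.val.2.1 - x.val.1)) (φ x.block ⟨e x.top, basis_top_mem_Vsub e x⟩) :=
  e.constr_basis F _ x

lemma topLift_apply_top (φ : BlockMaps e X) (x : RIdx r d) :
    topLift φ (e x.top) = φ x.block ⟨e x.top, basis_top_mem_Vsub e x⟩ := by
  rw [topLift_apply_basis, show x.top.val.2.1 - x.top.val.1 = 0 from Nat.sub_self _, pow_zero]
  rfl

lemma topLift_apply_coe (φ : BlockMaps e X) (j : {j : ℕ // j ∈ Finset.Icc 1 r ∧ d j ≠ 0})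
    (v : ↥(Vsub r d e (j : ℕ) (j : ℕ))) : topLift φ (v : V) = φ j v := by
  suffices topLift φ ∘ₗ (Vsub r d e j j).subtype = (LinearMap.ker _).subtype ∘ₗ φ j from
    LinearMap.congr_fun this v
  refine LinearMap.ext_on Submodule.span_span_coe_preimage ?_
  rintro ⟨_, hv⟩ ⟨x, hxi, hxj, rfl⟩
  obtain rfl : x.block = j := Subtype.ext hxj
  have hx := top_eq_self (hxi.trans hxj.symm)
  simp only [LinearMap.comp_apply, Submodule.subtype_apply]
  conv_lhs => rw [← hx, topLift_apply_top]
  simp_rw [hx]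

lemma topLift_comp_eq (hX0 : KillsFirstRow e X) (hXs : LowersRows e X)
    (φ : BlockMaps e X) : topLift φ ∘ₗ X = X ∘ₗ topLift φ := by
  refine e.ext fun x => ?_
  have := x.prop.1
  have := x.prop.2.1
  rw [LinearMap.comp_apply, LinearMap.comp_apply, topLift_apply_basis,
    ← Module.End.mul_apply X, ← pow_succ']
  rcases (show x.val.1 = 1 ∨ 2 ≤ x.val.1 by omega) with h | h
  · rw [hX0 x h, map_zero, h, Nat.sub_add_cancel (by omega)]
    exact (LinearMap.mem_ker.mp (φ x.block _).prop).symm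
  · rw [hXs x (x.withRow (x.val.1 - 1) (by omega) (by omega)) (by simp only [withRow]; omega) rfl,
      topLift_apply_basis]
    congr 2
    simp only [withRow]
    omega

end JordanBasis

theorem stmt_10_general (r : ℕ) (d : ℕ → ℕ)
    (F : Type*) [Field F] (V : Type*) [AddCommGroup V] [Module F V]
    (e : Module.Basis (RIdx r d) F V) (X : Module.End F V)
    (hX0 : ∀ x : RIdx r d, x.val.1 = 1 → X (e x) = 0)
    (hXs : ∀ x y : RIdx r d, x.val.1 = y.val.1 + 1 → x.val.2 = y.val.2 →
      X (e x) = e y) :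
    (∀ Y : Module.End F V, Y ∘ₗ X = X ∘ₗ Y →
      ∀ j, j ∈ Finset.Icc 1 r → d j ≠ 0 →
        ∀ v ∈ Vsub r d e j j, Y v ∈ LinearMap.ker (X ^ j)) ∧
    (∀ φ : (j : {j : ℕ // j ∈ Finset.Icc 1 r ∧ d j ≠ 0}) →
        (↥(Vsub r d e (j : ℕ) (j : ℕ)) →ₗ[F] ↥(LinearMap.ker (X ^ (j : ℕ)))),
      ∃! Y : Module.End F V, Y ∘ₗ X = X ∘ₗ Y ∧
        ∀ (j : {j : ℕ // j ∈ Finset.Icc 1 r ∧ d j ≠ 0})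
          (v : ↥(Vsub r d e (j : ℕ) (j : ℕ))),
          Y (v : V) = ((φ j v : ↥(LinearMap.ker (X ^ (j : ℕ)))) : V)) := by
  refine ⟨fun Y hY j _ _ v hv =>
    Module.End.apply_mem_ker_pow_of_comp_eq hY j (Vsub_le_ker_pow hX0 hXs j j hv), fun φ => ?_⟩
  have hφ := topLift_comp_eq hX0 hXs φ
  refine ⟨topLift φ, ⟨hφ, topLift_apply_coe φ⟩, fun Y ⟨hY, hYφ⟩ => ?_⟩
  exact ext_of_comp_eq_of_apply_top hXs hY hφ fun x =>
    (hYφ x.block _).trans (topLift_apply_top φ x).symm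

/-- every `Y` commuting with `X` maps `V_j^j` into `Ker(X^j)` for all
`j ∈ J`; and `Y ↦ (Y|_{V_j^j})_{j∈J}` is a bijection from the centralizer of `X` in
`End_F(V)` onto `∏_{j∈J} Hom_F(V_j^j, Ker(X^j))` (stated as: every tuple of maps
`V_j^j →ₗ Ker(X^j)` is the family of restrictions of a unique `Y` commuting with `X`). -/
theorem stmt_10 (r : ℕ) (hr : 1 ≤ r) (d : ℕ → ℕ) (hd : 1 ≤ d r)
    (F : Type*) [Field F] [CharZero F] (V : Type*) [AddCommGroup V] [Module F V]
    (e : Module.Basis (RIdx r d) F V) (X : Module.End F V)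
    (hX0 : ∀ x : RIdx r d, x.val.1 = 1 → X (e x) = 0)
    (hXs : ∀ x y : RIdx r d, x.val.1 = y.val.1 + 1 → x.val.2 = y.val.2 →
      X (e x) = e y) :
    (∀ Y : Module.End F V, Y ∘ₗ X = X ∘ₗ Y →
      ∀ j, j ∈ Finset.Icc 1 r → d j ≠ 0 →
        ∀ v ∈ Vsub r d e j j, Y v ∈ LinearMap.ker (X ^ j)) ∧
    (∀ φ : (j : {j : ℕ // j ∈ Finset.Icc 1 r ∧ d j ≠ 0}) →
        (↥(Vsub r d e (j : ℕ) (j : ℕ)) →ₗ[F] ↥(LinearMap.ker (X ^ (j : ℕ)))),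
      ∃! Y : Module.End F V, Y ∘ₗ X = X ∘ₗ Y ∧
        ∀ (j : {j : ℕ // j ∈ Finset.Icc 1 r ∧ d j ≠ 0})
          (v : ↥(Vsub r d e (j : ℕ) (j : ℕ))),
          Y (v : V) = ((φ j v : ↥(LinearMap.ker (X ^ (j : ℕ)))) : V)) :=
  stmt_10_general r d F V e X hX0 hXs
end
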